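/- Define the bivariate functions T_{ij}(r,s) = q^{iℓ} K_j(m-i,ℓ;q;s) E_i(n-s,m-s;q;r) on the domain D = {(a,b) ∈ ℕ² : a+b ≤ m, a ≤ n-m, b ≤ ℓ}. Then T_{ij} satisfies the three-term recurrence in j: (q^{-s} - 1) T_{ij}(r,s) = b⁺(i,j) T_{i,j+1}(r,s) + b⁰(i,j) T_{ij}(r,s) + b⁻(i,j) T_{i,j-1}(r,s), where b⁺(i,j) = q^{i+j-ℓ-m}(q^{j+1}-1), b⁻(i,j) = (q^{j-ℓ-1}-1)(q^{i+j-m-1}-1), and b⁰(i,j) = -b⁺(i,j-1) - b⁻(i,j+1). -/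
import Mathlib


noncomputable section

/-- q-Pochhammer symbol `(a;q)_k = ∏_{i=0}^{k-1} (1 - a q^i)`. -/
def qPoch (q a : ℝ) (k : ℕ) : ℝ := ∏ i ∈ Finset.range k, (1 - a * q ^ i)

/-- Gaussian (q-binomial) coefficient `[n choose m]_q`. -/
def gbinom (q : ℝ) (n m : ℕ) : ℝ := qPoch q q n / (qPoch q q m * qPoch q q (n - m))

/-- Terminating basic hypergeometric series `₃φ₂(a₁,a₂,a₃;b₁,b₂ | q, z)`,
summed up to degree `deg`. -/
def phi32 (q a1 a2 a3 b1 b2 z : ℝ) (deg : ℕ) : ℝ :=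
  ∑ k ∈ Finset.range (deg + 1),
    (qPoch q a1 k * qPoch q a2 k * qPoch q a3 k) /
      (qPoch q b1 k * qPoch q b2 k * qPoch q q k) * z ^ k

/-- Normalized affine q-Krawtchouk polynomial `K_j(N,ℓ;q;s)`, with the convention
that it vanishes when `j` is outside `[0, min(N,ℓ)]`. -/
def Kpoly (q : ℝ) (N ℓ : ℕ) (j s : ℤ) : ℝ :=
  if 0 ≤ j ∧ j ≤ min (N : ℤ) (ℓ : ℤ) then
    qPoch q (q ^ (-(ℓ : ℤ))) j.toNat * gbinom q N j.toNat * q ^ ((ℓ : ℤ) * j) *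
      phi32 q (q ^ (-j)) 0 (q ^ (-s)) (q ^ (-(ℓ : ℤ))) (q ^ (-(N : ℤ))) q j.toNat
  else 0

/-- Normalized dual q-Hahn polynomial `E_i(N,m;q;r)`, with the convention
that it vanishes when `i` is outside `[0, min(N-m,m)]`. -/
def Epoly (q : ℝ) (N m : ℕ) (i r : ℤ) : ℝ :=
  if 0 ≤ i ∧ i ≤ min ((N : ℤ) - (m : ℤ)) (m : ℤ) then
    q ^ (i * i) * gbinom q m i.toNat * gbinom q (N - m) i.toNat *
      phi32 q (q ^ (-i)) (q ^ (-r)) (q ^ (r - (N : ℤ) - 1)) (q ^ (-(m : ℤ)))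
        (q ^ ((m : ℤ) - (N : ℤ))) q i.toNat
  else 0

/-- The bivariate eigenvalue function `T_{ij}(r,s) = q^{iℓ} K_j(m-i,ℓ;q;s) E_i(n-s,m-s;q;r)`. -/
def Tpoly (q : ℝ) (n ℓ m : ℕ) (i : ℕ) (j : ℤ) (r s : ℕ) : ℝ :=
  q ^ ((i : ℤ) * (ℓ : ℤ)) * Kpoly q (m - i) ℓ j s * Epoly q (n - s) (m - s) i r

/-- Recurrence coefficient `b⁺(i,j)`. -/
def bp (q : ℝ) (ℓ m : ℕ) (i j : ℤ) : ℝ :=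
  q ^ (i + j - (ℓ : ℤ) - (m : ℤ)) * (q ^ (j + 1) - 1)

/-- Recurrence coefficient `b⁻(i,j)`. -/
def bm (q : ℝ) (ℓ m : ℕ) (i j : ℤ) : ℝ :=
  (q ^ (j - (ℓ : ℤ) - 1) - 1) * (q ^ (i + j - (m : ℤ) - 1) - 1)

/-- Recurrence coefficient `b⁰(i,j)`. -/
def b0 (q : ℝ) (ℓ m : ℕ) (i j : ℤ) : ℝ := -bp q ℓ m i (j - 1) - bm q ℓ m i (j + 1)

namespace Aux

lemma qPoch_succ (q a : ℝ) (k : ℕ) : qPoch q a (k+1) = qPoch q a k * (1 - a * q ^ k) :=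
  Finset.prod_range_succ _ _

lemma qPoch_succ' (q a : ℝ) (k : ℕ) : qPoch q a (k+1) = (1 - a) * qPoch q (a*q) k := by
  rw [qPoch, Finset.prod_range_succ', mul_comm]
  simp only [pow_zero, mul_one, qPoch]
  congr 1
  refine Finset.prod_congr rfl fun i _ => ?_
  rw [pow_succ]; ring

lemma qPoch_zero_a (q : ℝ) (k : ℕ) : qPoch q 0 k = 1 := by simp [qPoch]

lemma factor_eq {q : ℝ} (hq0 : q ≠ 0) (t : ℤ) (i : ℕ) :
    1 - q ^ t * q ^ i = 1 - q ^ (t + i) := by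
  rw [zpow_add₀ hq0, zpow_natCast]

lemma one_sub_zpow_ne {q : ℝ} (hq : 1 < q) {t : ℤ} (ht : t ≠ 0) : 1 - q ^ t ≠ 0 := by
  have h1 : q ^ t ≠ 1 := fun h => ht
    ((zpow_eq_one_iff_right₀ (by linarith) (by linarith)).mp h)
  exact sub_ne_zero.mpr (Ne.symm h1)

lemma qPoch_zpow_succ {q : ℝ} (hq0 : q ≠ 0) (t : ℤ) (k : ℕ) :
    qPoch q (q ^ t) (k+1) = qPoch q (q ^ t) k * (1 - q ^ (t + k)) := by
  rw [qPoch_succ, factor_eq hq0]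

lemma qPoch_zpow_succ' {q : ℝ} (hq0 : q ≠ 0) (t : ℤ) (k : ℕ) :
    qPoch q (q ^ t) (k+1) = (1 - q ^ t) * qPoch q (q ^ (t+1)) k := by
  rw [qPoch_succ', zpow_add₀ hq0, zpow_one]

lemma qPoch_zpow_ne_zero {q : ℝ} (hq : 1 < q) (t : ℤ) (k : ℕ)
    (h : ∀ i : ℕ, i < k → t + i ≠ 0) : qPoch q (q ^ t) k ≠ 0 := by
  rw [qPoch]
  refine Finset.prod_ne_zero_iff.mpr fun i hi => ?_
  rw [factor_eq (by linarith) t i]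
  exact one_sub_zpow_ne hq (h i (Finset.mem_range.mp hi))

lemma qPoch_q_ne_zero {q : ℝ} (hq : 1 < q) (k : ℕ) : qPoch q q k ≠ 0 := by
  have h := qPoch_zpow_ne_zero hq 1 k (fun i _ => by omega)
  rwa [zpow_one] at h

lemma qPoch_neg_ne_zero {q : ℝ} (hq : 1 < q) (a k : ℕ) (hk : k ≤ a) :
    qPoch q (q ^ (-(a:ℤ))) k ≠ 0 :=
  qPoch_zpow_ne_zero hq _ k (fun i hi => by omega)

lemma qPoch_neg_eq_zero {q : ℝ} (hq0 : q ≠ 0) (a k : ℕ) (hk : a < k) :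
    qPoch q (q ^ (-(a:ℤ))) k = 0 := by
  rw [qPoch]
  refine Finset.prod_eq_zero (Finset.mem_range.mpr hk) ?_
  rw [factor_eq hq0]
  simp

/-- the constant `C_t` -/
def Cc (q : ℝ) (N ℓ t : ℕ) : ℝ := qPoch q (q ^ (-(ℓ:ℤ))) t * gbinom q N t * q ^ ((ℓ:ℤ) * t)

/-- the denominator `D_k` -/
def Dd (q : ℝ) (N ℓ k : ℕ) : ℝ :=
  qPoch q (q ^ (-(ℓ:ℤ))) k * qPoch q (q ^ (-(N:ℤ))) k * qPoch q q k

/-- the summand `F_{t,k}` -/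
def Ff (q : ℝ) (N ℓ s t k : ℕ) : ℝ :=
  Cc q N ℓ t * (qPoch q (q ^ (-(t:ℤ))) k * q ^ k / Dd q N ℓ k) * qPoch q (q ^ (-(s:ℤ))) k

lemma Dd_ne_zero {q : ℝ} (hq : 1 < q) {N ℓ k : ℕ} (hkN : k ≤ N) (hkl : k ≤ ℓ) :
    Dd q N ℓ k ≠ 0 :=
  mul_ne_zero (mul_ne_zero (qPoch_neg_ne_zero hq ℓ k hkl) (qPoch_neg_ne_zero hq N k hkN))
    (qPoch_q_ne_zero hq k)

lemma Cc_succ_rel {q : ℝ} (hq : 1 < q) {N ℓ j : ℕ} (hjN : j + 1 ≤ N) (hjl : j + 1 ≤ ℓ) :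
    q ^ ((j:ℤ) - ℓ - N) * (q ^ ((j:ℤ)+1) - 1) * Cc q N ℓ (j+1)
      = (1 - q ^ ((j:ℤ) - ℓ)) * (1 - q ^ ((j:ℤ) - N)) * Cc q N ℓ j := by
  have hq0 : q ≠ 0 := by linarith
  have e1 : qPoch q (q ^ (-(ℓ:ℤ))) (j+1)
      = qPoch q (q ^ (-(ℓ:ℤ))) j * (1 - q ^ (-(ℓ:ℤ) + j)) := qPoch_zpow_succ hq0 _ j
  have e2 : qPoch q q (j+1) = qPoch q q j * (1 - q ^ ((1:ℤ) + j)) := by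
    have h := qPoch_zpow_succ hq0 1 j
    rwa [zpow_one] at h
  have e3 : qPoch q q (N - j) = qPoch q q (N - (j+1)) * (1 - q ^ ((N:ℤ) - j)) := by
    have h := qPoch_zpow_succ hq0 1 (N - (j+1))
    rw [zpow_one, show ((1:ℤ) + ((N - (j+1) : ℕ) : ℤ)) = (N:ℤ) - (j:ℤ) from by omega] at h
    rw [show N - j = (N - (j+1)) + 1 from by omega, h]
  have e4 : (q : ℝ) ^ ((ℓ:ℤ) * ((j:ℕ)+1 : ℕ)) = q ^ ((ℓ:ℤ) * j) * q ^ (ℓ:ℤ) := by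
    rw [show (ℓ:ℤ) * (((j:ℕ)+1:ℕ):ℤ) = (ℓ:ℤ)*j + ℓ from by push_cast; ring, zpow_add₀ hq0]
  have h2 : qPoch q q j ≠ 0 := qPoch_q_ne_zero hq j
  have h3 : qPoch q q (N - (j+1)) ≠ 0 := qPoch_q_ne_zero hq _
  have h4 : (1 : ℝ) - q ^ ((1:ℤ) + j) ≠ 0 := one_sub_zpow_ne hq (by omega)
  have h5 : (1 : ℝ) - q ^ ((N:ℤ) - j) ≠ 0 := one_sub_zpow_ne hq (by omega)
  rw [Cc, Cc, gbinom, gbinom, e1, e2, e4, e3]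
  have hz : ∀ t : ℤ, (q:ℝ) ^ t ≠ 0 := fun t => zpow_ne_zero t hq0
  field_simp
  rw [show (-(ℓ:ℤ) + j) = (j:ℤ) - ℓ from by ring]
  rw [show ((j:ℤ) - ℓ - N) = (j:ℤ) - ℓ - N from rfl]
  simp only [zpow_sub₀ hq0, zpow_add₀ hq0, zpow_one, zpow_natCast]
  field_simp
  ring

end Aux

namespace Aux2
open Aux

variable {q : ℝ}

lemma qPoch_zero_k (q a : ℝ) : qPoch q a 0 = 1 := by simp [qPoch]

lemma Dd_zero (q : ℝ) (N ℓ : ℕ) : Dd q N ℓ 0 = 1 := by simp [Dd, qPoch]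

lemma gamma_nm (hq0 : q ≠ 0) (j ℓ N k : ℕ) :
    q ^ ((j:ℤ) - N - ℓ - 1) * (q ^ (j:ℤ) - 1) * qPoch q (q ^ ((1:ℤ) - (j:ℤ))) k
      = q ^ ((j:ℤ) + (j:ℤ) - 1 - ℓ - N) *
          (qPoch q (q ^ (-(j:ℤ))) k * (1 - q ^ (-(j:ℤ) + (k:ℤ)))) := by
  have h1 := qPoch_zpow_succ' hq0 (-(j:ℤ)) k
  have h2 := qPoch_zpow_succ hq0 (-(j:ℤ)) k
  rw [show (-(j:ℤ) + 1) = (1:ℤ) - (j:ℤ) from by ring] at h1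
  have hγ : q ^ ((j:ℤ) - N - ℓ - 1) * (q ^ (j:ℤ) - 1)
      = q ^ ((j:ℤ) + (j:ℤ) - 1 - ℓ - N) * (1 - q ^ (-(j:ℤ))) := by
    simp only [zpow_sub₀ hq0, zpow_add₀ hq0, zpow_neg, zpow_one]
    field_simp
  rw [hγ]
  linear_combination q ^ ((j:ℤ) + (j:ℤ) - 1 - (ℓ:ℤ) - (N:ℤ)) * (h2 - h1)

lemma Cc_pred_rel (hq : 1 < q) {N ℓ j : ℕ} (hj1 : 1 ≤ j) (hjN : j ≤ N) (hjl : j ≤ ℓ) :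
    (q ^ ((j:ℤ) - ℓ - 1) - 1) * (q ^ ((j:ℤ) - N - 1) - 1) * Cc q N ℓ (j-1)
      = q ^ ((j:ℤ) - N - ℓ - 1) * (q ^ (j:ℤ) - 1) * Cc q N ℓ j := by
  have hq0 : q ≠ 0 := by linarith
  have cp := Cc_succ_rel hq (N := N) (ℓ := ℓ) (j := j-1) (by omega) (by omega)
  rw [show ((j-1:ℕ):ℤ) = (j:ℤ) - 1 from by omega, show (j-1)+1 = j from by omega] at cp
  rw [show (j:ℤ) - ℓ - 1 = (j:ℤ) - 1 - ℓ from by ring,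
      show (j:ℤ) - N - 1 = (j:ℤ) - 1 - N from by ring,
      show (j:ℤ) - N - ℓ - 1 = (j:ℤ) - 1 - ℓ - N from by ring]
  rw [show (j:ℤ) - 1 + 1 = (j:ℤ) from by ring] at cp
  linear_combination -cp

lemma abg (hq0 : q ≠ 0) (j ℓ N : ℕ) :
    (1 - q ^ ((j:ℤ) - (ℓ:ℤ))) * (1 - q ^ ((j:ℤ) - (N:ℤ)))
      + (-(q ^ ((j:ℤ) - 1 - (ℓ:ℤ) - (N:ℤ)) * (q ^ (j:ℤ) - 1))
          - (q ^ ((j:ℤ) - (ℓ:ℤ)) - 1) * (q ^ ((j:ℤ) - (N:ℤ)) - 1))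
      + q ^ ((j:ℤ) + (j:ℤ) - 1 - (ℓ:ℤ) - (N:ℤ)) * (1 - q ^ (-(j:ℤ))) = 0 := by
  simp only [zpow_sub₀ hq0, zpow_add₀ hq0, zpow_neg, zpow_one]
  field_simp
  ring

lemma Pstep (hq0 : q ≠ 0) (s k : ℕ) :
    (q ^ (-(s:ℤ)) - 1) * qPoch q (q ^ (-(s:ℤ))) k
      = (q ^ (-(k:ℤ)) - 1) * qPoch q (q ^ (-(s:ℤ))) k
        - q ^ (-(k:ℤ)) * qPoch q (q ^ (-(s:ℤ))) (k+1) := by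
  rw [qPoch_succ, ← zpow_natCast q k]
  have h : q ^ (-(k:ℤ)) * q ^ ((k:ℕ):ℤ) = 1 := by
    rw [← zpow_add₀ hq0]; simp
  linear_combination (-(q ^ (-(s:ℤ))) * qPoch q (q ^ (-(s:ℤ))) k) * h

lemma Krep (hq : 1 < q) (N ℓ s t M : ℕ) (htN : t ≤ N) (htl : t ≤ ℓ) (hM : t ≤ M) :
    Kpoly q N ℓ (t:ℤ) (s:ℤ) = ∑ k ∈ Finset.range (M+1), Ff q N ℓ s t k := by
  have hq0 : q ≠ 0 := by linarith
  rw [Kpoly, if_pos ⟨Int.natCast_nonneg t, by rw [le_min_iff]; constructor <;> omega⟩,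
      Int.toNat_natCast, phi32, Finset.mul_sum]
  have hvan : ∀ k ∈ Finset.range (M+1), k ∉ Finset.range (t+1) → Ff q N ℓ s t k = 0 := by
    intro k _ hk
    simp only [Finset.mem_range, not_lt] at hk
    rw [Ff, qPoch_neg_eq_zero hq0 t k (by omega)]
    simp
  rw [← Finset.sum_subset (Finset.range_subset_range.mpr (by omega : t + 1 ≤ M + 1)) hvan]
  refine Finset.sum_congr rfl fun k _ => ?_
  rw [Ff, Cc, Dd, qPoch_zero_a]
  ring

end Aux2

namespace Aux3
open Aux Aux2

variable {q : ℝ}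

/-- the shifted summand appearing on the left-hand side -/
def Bb (q : ℝ) (N ℓ s j k : ℕ) : ℝ :=
  Cc q N ℓ j * (qPoch q (q ^ (-(j:ℤ))) k * q ^ k / Dd q N ℓ k) *
    (q ^ (-(k:ℤ)) * qPoch q (q ^ (-(s:ℤ))) (k+1))

set_option maxHeartbeats 2000000 in
lemma PerK (hq : 1 < q) (N ℓ s j : ℕ) (hjN : j ≤ N) (hjl : j ≤ ℓ)
    (hsN : s ≤ N) (hsl : s ≤ ℓ) (k : ℕ) :
    (q ^ (-(k:ℤ)) - 1) * Ff q N ℓ s j k - (if k = 0 then 0 else Bb q N ℓ s j (k-1))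
      = (1 - q ^ ((j:ℤ) - (ℓ:ℤ))) * (1 - q ^ ((j:ℤ) - (N:ℤ))) *
          (Cc q N ℓ j * (qPoch q (q ^ (-(j:ℤ) - 1)) k * q ^ k / Dd q N ℓ k) *
            qPoch q (q ^ (-(s:ℤ))) k)
        + (-(q ^ ((j:ℤ) - 1 - (ℓ:ℤ) - (N:ℤ)) * (q ^ (j:ℤ) - 1))
            - (q ^ ((j:ℤ) - (ℓ:ℤ)) - 1) * (q ^ ((j:ℤ) - (N:ℤ)) - 1)) * Ff q N ℓ s j k
        + q ^ ((j:ℤ) + (j:ℤ) - 1 - (ℓ:ℤ) - (N:ℤ)) *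
          (Cc q N ℓ j * (qPoch q (q ^ (-(j:ℤ))) k * (1 - q ^ (-(j:ℤ) + (k:ℤ))) * q ^ k / Dd q N ℓ k) *
            qPoch q (q ^ (-(s:ℤ))) k) := by
  have hq0 : q ≠ 0 := by linarith
  match k with
  | 0 =>
    rw [if_pos rfl]
    simp only [Ff, qPoch_zero_k, Dd_zero, pow_zero, Nat.cast_zero, neg_zero, zpow_zero,
      add_zero, mul_one, one_mul, div_one, sub_self, zero_mul, sub_zero]
    simp only [zpow_sub₀ hq0, zpow_add₀ hq0, zpow_neg, zpow_one, zpow_natCast]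
    field_simp
    ring
  | k'+1 =>
    rw [if_neg (by omega : ¬(k' + 1 = 0)), Nat.add_sub_cancel]
    by_cases hk : k' + 1 ≤ N ∧ k' + 1 ≤ ℓ
    · obtain ⟨hkN, hkl⟩ := hk
      have hD0 : Dd q N ℓ k' ≠ 0 := Dd_ne_zero hq (by omega) (by omega)
      have hf1 : (1:ℝ) - q ^ (-(ℓ:ℤ) + (k':ℤ)) ≠ 0 := one_sub_zpow_ne hq (by omega)
      have hf2 : (1:ℝ) - q ^ (-(N:ℤ) + (k':ℤ)) ≠ 0 := one_sub_zpow_ne hq (by omega)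
      have hf3 : (1:ℝ) - q ^ ((1:ℤ) + (k':ℤ)) ≠ 0 := one_sub_zpow_ne hq (by omega)
      have hD : Dd q N ℓ (k'+1) = Dd q N ℓ k' *
          ((1 - q ^ (-(ℓ:ℤ) + (k':ℤ))) * (1 - q ^ (-(N:ℤ) + (k':ℤ))) * (1 - q ^ ((1:ℤ) + (k':ℤ)))) := by
        have e3 : qPoch q q (k'+1) = qPoch q q k' * (1 - q ^ ((1:ℤ) + (k':ℤ))) := by
          have h := qPoch_zpow_succ hq0 1 k'
          rwa [zpow_one] at h
        rw [Dd, Dd, qPoch_zpow_succ hq0 (-(ℓ:ℤ)) k', qPoch_zpow_succ hq0 (-(N:ℤ)) k', e3]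
        ring
      have hn : qPoch q (q ^ (-(j:ℤ))) (k'+1)
          = qPoch q (q ^ (-(j:ℤ))) k' * (1 - q ^ (-(j:ℤ) + (k':ℤ))) := qPoch_zpow_succ hq0 _ k'
      have hn1 : qPoch q (q ^ (-(j:ℤ) - 1)) (k'+1)
          = (1 - q ^ (-(j:ℤ) - 1)) * qPoch q (q ^ (-(j:ℤ))) k' := by
        have h := qPoch_zpow_succ' hq0 (-(j:ℤ) - 1) k'
        rwa [show (-(j:ℤ) - 1 + 1) = -(j:ℤ) from by ring] at h
      have hDk1 : Dd q N ℓ (k'+1) ≠ 0 := Dd_ne_zero hq hkN hkl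
      rw [Ff, Bb, hn, hn1]
      field_simp
      rw [hD]
      push_cast
      simp only [zpow_sub₀ hq0, zpow_add₀ hq0, zpow_neg, zpow_one, zpow_natCast]
      field_simp
      ring
    · have hs : s < k' + 1 := by omega
      have hP : qPoch q (q ^ (-(s:ℤ))) (k'+1) = 0 := qPoch_neg_eq_zero hq0 s _ hs
      simp only [Ff, Bb, hP, mul_zero, zero_mul, sub_zero, add_zero, zero_div, zero_add]

end Aux3

namespace Aux4
open Aux Aux2 Aux3

variable {q : ℝ}

lemma Krec (hq : 1 < q) (N ℓ s j : ℕ) (hjN : j ≤ N) (hjl : j ≤ ℓ)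
    (hsN : s ≤ N) (hsl : s ≤ ℓ) :
    (q ^ (-(s:ℤ)) - 1) * Kpoly q N ℓ (j:ℤ) (s:ℤ)
      = q ^ ((j:ℤ) - ℓ - N) * (q ^ ((j:ℤ) + 1) - 1) * Kpoly q N ℓ ((j:ℤ) + 1) (s:ℤ)
        + (-(q ^ ((j:ℤ) - 1 - ℓ - N) * (q ^ (j:ℤ) - 1))
            - (q ^ ((j:ℤ) - ℓ) - 1) * (q ^ ((j:ℤ) - N) - 1)) * Kpoly q N ℓ (j:ℤ) (s:ℤ)
        + (q ^ ((j:ℤ) - ℓ - 1) - 1) * (q ^ ((j:ℤ) - N - 1) - 1) * Kpoly q N ℓ ((j:ℤ) - 1) (s:ℤ) := by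
  have hq0 : q ≠ 0 := by linarith
  -- the `b⁺`–side
  have h1 : q ^ ((j:ℤ) - ℓ - N) * (q ^ ((j:ℤ) + 1) - 1) * Kpoly q N ℓ ((j:ℤ) + 1) (s:ℤ)
      = ∑ k ∈ Finset.range (j+3), (1 - q ^ ((j:ℤ) - (ℓ:ℤ))) * (1 - q ^ ((j:ℤ) - (N:ℤ))) *
          (Cc q N ℓ j * (qPoch q (q ^ (-(j:ℤ) - 1)) k * q ^ k / Dd q N ℓ k) *
            qPoch q (q ^ (-(s:ℤ))) k) := by
    by_cases hc : j + 1 ≤ N ∧ j + 1 ≤ ℓ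
    · have hrep : Kpoly q N ℓ ((j:ℤ) + 1) (s:ℤ)
          = ∑ k ∈ Finset.range (j+3), Ff q N ℓ s (j+1) k := by
        rw [show ((j:ℤ) + 1) = ((j+1:ℕ):ℤ) from by push_cast; ring]
        exact Krep hq N ℓ s (j+1) (j+2) hc.1 hc.2 (by omega)
      rw [hrep, Finset.mul_sum]
      refine Finset.sum_congr rfl fun k _ => ?_
      rw [Ff, show (q:ℝ) ^ (-((j+1:ℕ):ℤ)) = q ^ (-(j:ℤ) - 1) from by congr 1; push_cast; ring]
      have hcc := Cc_succ_rel hq hc.1 hc.2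
      linear_combination (qPoch q (q ^ (-(j:ℤ) - 1)) k * q ^ k / Dd q N ℓ k *
        qPoch q (q ^ (-(s:ℤ))) k) * hcc
    · have hK : Kpoly q N ℓ ((j:ℤ) + 1) (s:ℤ) = 0 := by
        rw [Kpoly, if_neg]
        rintro ⟨-, h2⟩
        rw [le_min_iff] at h2
        omega
      have hα : (1 - q ^ ((j:ℤ) - (ℓ:ℤ))) * (1 - q ^ ((j:ℤ) - (N:ℤ))) = 0 := by
        rcases (by omega : j = N ∨ j = ℓ) with h | h <;> rw [h] <;> simp
      rw [hK]
      simp [hα]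
  -- the `b⁰`–side
  have h2 : (-(q ^ ((j:ℤ) - 1 - (ℓ:ℤ) - (N:ℤ)) * (q ^ (j:ℤ) - 1))
        - (q ^ ((j:ℤ) - (ℓ:ℤ)) - 1) * (q ^ ((j:ℤ) - (N:ℤ)) - 1)) * Kpoly q N ℓ (j:ℤ) (s:ℤ)
      = ∑ k ∈ Finset.range (j+3), (-(q ^ ((j:ℤ) - 1 - (ℓ:ℤ) - (N:ℤ)) * (q ^ (j:ℤ) - 1))
          - (q ^ ((j:ℤ) - (ℓ:ℤ)) - 1) * (q ^ ((j:ℤ) - (N:ℤ)) - 1)) * Ff q N ℓ s j k := by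
    rw [Krep hq N ℓ s j (j+2) hjN hjl (by omega), Finset.mul_sum]
  -- the `b⁻`–side
  have h3 : (q ^ ((j:ℤ) - ℓ - 1) - 1) * (q ^ ((j:ℤ) - N - 1) - 1) * Kpoly q N ℓ ((j:ℤ) - 1) (s:ℤ)
      = ∑ k ∈ Finset.range (j+3), q ^ ((j:ℤ) + (j:ℤ) - 1 - (ℓ:ℤ) - (N:ℤ)) *
          (Cc q N ℓ j * (qPoch q (q ^ (-(j:ℤ))) k * (1 - q ^ (-(j:ℤ) + (k:ℤ))) * q ^ k / Dd q N ℓ k) *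
            qPoch q (q ^ (-(s:ℤ))) k) := by
    rcases Nat.eq_zero_or_pos j with hj0 | hj1
    · subst hj0
      have hK : Kpoly q N ℓ (((0:ℕ):ℤ) - 1) (s:ℤ) = 0 := by
        rw [Kpoly, if_neg]
        rintro ⟨h, -⟩
        omega
      rw [hK, mul_zero]
      refine (Finset.sum_eq_zero fun k _ => ?_).symm
      match k with
      | 0 => simp
      | k'+1 =>
        rw [qPoch_neg_eq_zero hq0 0 (k'+1) (by omega)]
        simp
    · have hrep : Kpoly q N ℓ ((j:ℤ) - 1) (s:ℤ)
          = ∑ k ∈ Finset.range (j+3), Ff q N ℓ s (j-1) k := by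
        rw [show ((j:ℤ) - 1) = ((j-1:ℕ):ℤ) from by omega]
        exact Krep hq N ℓ s (j-1) (j+2) (by omega) (by omega) (by omega)
      rw [hrep, Finset.mul_sum]
      refine Finset.sum_congr rfl fun k _ => ?_
      rw [Ff, show (q:ℝ) ^ (-((j-1:ℕ):ℤ)) = q ^ ((1:ℤ) - (j:ℤ)) from by congr 1; omega]
      have hcm := Cc_pred_rel hq hj1 hjN hjl
      have hgnm := gamma_nm hq0 j ℓ N k
      linear_combination (qPoch q (q ^ ((1:ℤ) - (j:ℤ))) k * q ^ k / Dd q N ℓ k *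
          qPoch q (q ^ (-(s:ℤ))) k) * hcm
        + (Cc q N ℓ j * q ^ k / Dd q N ℓ k * qPoch q (q ^ (-(s:ℤ))) k) * hgnm
  -- the left-hand side
  have hL : (q ^ (-(s:ℤ)) - 1) * Kpoly q N ℓ (j:ℤ) (s:ℤ)
      = ∑ k ∈ Finset.range (j+3), ((q ^ (-(k:ℤ)) - 1) * Ff q N ℓ s j k
          - (if k = 0 then 0 else Bb q N ℓ s j (k-1))) := by
    rw [Krep hq N ℓ s j (j+2) hjN hjl (by omega), Finset.mul_sum]
    have e1 : ∀ k ∈ Finset.range (j+3), (q ^ (-(s:ℤ)) - 1) * Ff q N ℓ s j k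
        = (q ^ (-(k:ℤ)) - 1) * Ff q N ℓ s j k - Bb q N ℓ s j k := by
      intro k _
      have hp := Pstep hq0 s k
      rw [Ff, Bb]
      linear_combination (Cc q N ℓ j * (qPoch q (q ^ (-(j:ℤ))) k * q ^ k / Dd q N ℓ k)) * hp
    rw [Finset.sum_congr rfl e1, Finset.sum_sub_distrib, Finset.sum_sub_distrib]
    congr 1
    have hshift : ∑ k ∈ Finset.range (j+3), (if k = 0 then (0:ℝ) else Bb q N ℓ s j (k-1))
        = ∑ k ∈ Finset.range (j+2), Bb q N ℓ s j k := by
      rw [Finset.sum_range_succ']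
      simp
    have hBtop : Bb q N ℓ s j (j+2) = 0 := by
      rw [Bb, qPoch_neg_eq_zero hq0 j (j+2) (by omega)]
      simp
    rw [hshift, Finset.sum_range_succ, hBtop, add_zero]
  rw [hL, h1, h2, h3, ← Finset.sum_add_distrib, ← Finset.sum_add_distrib]
  exact Finset.sum_congr rfl fun k _ => PerK hq N ℓ s j hjN hjl hsN hsl k

end Aux4

/-- The three-term recurrence in `j` satisfied by the bivariate functions
`T_{ij}(r,s)` on the domain `D = {(a,b) : a+b ≤ m, a ≤ n-m, b ≤ ℓ}`. -/
theorem stmt12 (q : ℝ) (hq : 1 < q) (n ℓ m : ℕ) (hmn : m ≤ n)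
    (i j r s : ℕ)
    (hij : i + j ≤ m ∧ i ≤ n - m ∧ j ≤ ℓ)
    (hrs : r + s ≤ m ∧ r ≤ n - m ∧ s ≤ ℓ) :
    (q ^ (-(s : ℤ)) - 1) * Tpoly q n ℓ m i j r s
      = bp q ℓ m i j * Tpoly q n ℓ m i ((j : ℤ) + 1) r s
        + b0 q ℓ m i j * Tpoly q n ℓ m i j r s
        + bm q ℓ m i j * Tpoly q n ℓ m i ((j : ℤ) - 1) r s := by
  obtain ⟨hijm, hin, hjl⟩ := hij
  obtain ⟨hrsm, hrn, hsl⟩ := hrs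
  by_cases hE : i + s ≤ m
  · have him : i ≤ m := by omega
    have hKrec := Aux4.Krec hq (m - i) ℓ s j (by omega) hjl (by omega) hsl
    have hbp : bp q ℓ m (i:ℤ) (j:ℤ)
        = q ^ ((j:ℤ) - ℓ - ((m - i : ℕ):ℤ)) * (q ^ ((j:ℤ) + 1) - 1) := by
      rw [bp, show ((i:ℤ) + (j:ℤ) - (ℓ:ℤ) - (m:ℤ)) = (j:ℤ) - ℓ - ((m - i : ℕ):ℤ) from by omega]
    have hbm : bm q ℓ m (i:ℤ) (j:ℤ)
        = (q ^ ((j:ℤ) - ℓ - 1) - 1) * (q ^ ((j:ℤ) - ((m - i : ℕ):ℤ) - 1) - 1) := by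
      rw [bm, show ((i:ℤ) + (j:ℤ) - (m:ℤ) - 1) = (j:ℤ) - ((m - i : ℕ):ℤ) - 1 from by omega]
    have hb0 : b0 q ℓ m (i:ℤ) (j:ℤ)
        = -(q ^ ((j:ℤ) - 1 - ℓ - ((m - i : ℕ):ℤ)) * (q ^ (j:ℤ) - 1))
            - (q ^ ((j:ℤ) - ℓ) - 1) * (q ^ ((j:ℤ) - ((m - i : ℕ):ℤ)) - 1) := by
      rw [b0, bp, bm,
        show ((i:ℤ) + ((j:ℤ) - 1) - (ℓ:ℤ) - (m:ℤ)) = (j:ℤ) - 1 - ℓ - ((m - i : ℕ):ℤ) from by omega,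
        show ((j:ℤ) - 1 + 1) = (j:ℤ) from by ring,
        show ((j:ℤ) + 1 - (ℓ:ℤ) - 1) = (j:ℤ) - ℓ from by ring,
        show ((i:ℤ) + ((j:ℤ) + 1) - (m:ℤ) - 1) = (j:ℤ) - ((m - i : ℕ):ℤ) from by omega]
    simp only [Tpoly]
    rw [hbp, hbm, hb0]
    linear_combination (q ^ ((i:ℤ) * (ℓ:ℤ)) * Epoly q (n - s) (m - s) (i:ℤ) (r:ℤ)) * hKrec
  · have hsm : s ≤ m := by omega
    have hE0 : Epoly q (n - s) (m - s) (i:ℤ) (r:ℤ) = 0 := by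
      rw [Epoly, if_neg]
      rintro ⟨-, h2⟩
      rw [le_min_iff] at h2
      have := h2.2
      omega
    simp [Tpoly, hE0]
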